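/- arXiv:2405.05132 — 6 statements merged into one kernel-verified Lean document; each statement's English description precedes it below -/
import Mathlib

section
/- Let G be a finite simple graph with girth g, and let H be a connected subgraph of G whose diameter D₀ satisfies 2·D₀ < g. Then for all vertices u, v of H, the shortest-path distance between u and v within H equals their shortest-path distance in G, i.e., d_H(u,v) = d_G(u,v). -/
open SimpleGraph

open Walk

private lemma path_len_one_of_edge {α : Type} {G : SimpleGraph α} {u v : α}
    (p : G.Walk u v) (hp : p.IsPath) (he : s(u, v) ∈ p.edges) : p.length = 1 := by
  cases p with
  | nil => simp at he
  | cons h p' =>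
    rename_i b
    rw [Walk.edges_cons, List.mem_cons] at he
    rcases he with he | he
    · rw [Sym2.eq_iff] at he
      rcases he with ⟨-, rfl⟩ | ⟨rfl, rfl⟩
      · rw [Walk.cons_isPath_iff] at hp
        rw [Walk.isPath_iff_eq_nil.mp hp.1]
        simp
      · exact absurd rfl h.ne
    · have := Walk.fst_mem_support_of_mem_edges p' he
      rw [Walk.cons_isPath_iff] at hp
      exact absurd this hp.2

private lemma eq_of_length_one {α : Type} {G : SimpleGraph α} {u v : α}
    (p q : G.Walk u v) (hp : p.length = 1) (hq : q.length = 1) : p = q := by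
  cases p with
  | nil => simp at hp
  | cons h p' =>
    cases p' with
    | nil =>
      cases q with
      | nil => simp at hq
      | cons h' q' =>
        cases q' with
        | nil => rfl
        | cons h'' q'' => simp [Walk.length_cons] at hq
    | cons h2 p'' => simp [Walk.length_cons] at hp

private lemma cycle_of_two_paths {α : Type} {G : SimpleGraph α} (n : ℕ) :
    ∀ {u v : α} (p q : G.Walk u v), p.IsPath → q.IsPath → p ≠ q →
      p.length + q.length ≤ n →
      ∃ (a : α) (c : G.Walk a a), c.IsCycle ∧ c.length ≤ p.length + q.length := by
  induction n using Nat.strong_induction_on with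
  | _ n ih =>
    intro u v p q hp hq hne hlen
    classical
    by_cases huv : u = v
    · subst huv
      rw [Walk.isPath_iff_eq_nil.mp hp, Walk.isPath_iff_eq_nil.mp hq] at hne
      exact absurd rfl hne
    by_cases hsh : ∃ w, w ∈ p.support ∧ w ∈ q.support ∧ w ≠ u ∧ w ≠ v
    · obtain ⟨w, hwp, hwq, hwu, hwv⟩ := hsh
      set p1 := p.takeUntil w hwp with hp1def
      set p2 := p.dropUntil w hwp with hp2def
      set q1 := q.takeUntil w hwq with hq1def
      set q2 := q.dropUntil w hwq with hq2def
      have hpspec : p1.append p2 = p := Walk.take_spec p hwp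
      have hqspec : q1.append q2 = q := Walk.take_spec q hwq
      have hplen : p1.length + p2.length = p.length := by
        rw [← Walk.length_append, hpspec]
      have hqlen : q1.length + q2.length = q.length := by
        rw [← Walk.length_append, hqspec]
      have hp1pos : 1 ≤ p1.length := by
        rcases Nat.eq_zero_or_pos p1.length with h | h
        · exact absurd (Walk.eq_of_length_eq_zero h) (Ne.symm hwu)
        · exact h
      have hp2pos : 1 ≤ p2.length := by
        rcases Nat.eq_zero_or_pos p2.length with h | h
        · exact absurd (Walk.eq_of_length_eq_zero h) hwv
        · exact h
      have hq1pos : 1 ≤ q1.length := by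
        rcases Nat.eq_zero_or_pos q1.length with h | h
        · exact absurd (Walk.eq_of_length_eq_zero h) (Ne.symm hwu)
        · exact h
      have hq2pos : 1 ≤ q2.length := by
        rcases Nat.eq_zero_or_pos q2.length with h | h
        · exact absurd (Walk.eq_of_length_eq_zero h) hwv
        · exact h
      by_cases h1 : p1 = q1
      · have h2 : p2 ≠ q2 := by
          intro h2
          apply hne
          rw [← hpspec, ← hqspec, h1, h2]
        obtain ⟨a, c, hc, hclen⟩ :=
          ih (p2.length + q2.length) (by omega) p2 q2 (hp.dropUntil hwp)
            (hq.dropUntil hwq) h2 le_rfl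
        exact ⟨a, c, hc, by omega⟩
      · obtain ⟨a, c, hc, hclen⟩ :=
          ih (p1.length + q1.length) (by omega) p1 q1 (hp.takeUntil hwp)
            (hq.takeUntil hwq) h1 le_rfl
        exact ⟨a, c, hc, by omega⟩
    · push_neg at hsh
      have hshared : ∀ w, w ∈ p.support → w ∈ q.support → w = u ∨ w = v := by
        intro w h1 h2
        by_contra hcon
        push_neg at hcon
        exact hcon.2 (hsh w h1 h2 hcon.1)
      -- edges of p and q are disjoint
      have hdisj : ∀ e, e ∈ p.edges → e ∈ q.edges → False := by
        intro e hep heq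
        induction e with
        | _ a b =>
          have hadj : G.Adj a b := Walk.edges_subset_edgeSet p hep
          have hap : a ∈ p.support := Walk.fst_mem_support_of_mem_edges p hep
          have hbp : b ∈ p.support := Walk.snd_mem_support_of_mem_edges p hep
          have haq : a ∈ q.support := Walk.fst_mem_support_of_mem_edges q heq
          have hbq : b ∈ q.support := Walk.snd_mem_support_of_mem_edges q heq
          have heuv : s(a, b) = s(u, v) := by
            rcases hshared a hap haq with rfl | rfl <;>
              rcases hshared b hbp hbq with rfl | rfl
            · exact absurd rfl hadj.ne
            · rfl
            · exact Sym2.eq_swap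
            · exact absurd rfl hadj.ne
          rw [heuv] at hep heq
          exact hne (eq_of_length_one p q (path_len_one_of_edge p hp hep)
            (path_len_one_of_edge q hq heq))
      refine ⟨u, p.append q.reverse, ?_, ?_⟩
      · rw [Walk.isCycle_def]
        refine ⟨⟨?_⟩, ?_, ?_⟩
        · rw [Walk.edges_append, Walk.edges_reverse]
          refine List.Nodup.append hp.isTrail.edges_nodup
            (List.nodup_reverse.mpr hq.isTrail.edges_nodup) ?_
          intro e he1 he2
          exact hdisj e he1 (List.mem_reverse.mp he2)
        · intro hnil
          have : (p.append q.reverse).length = 0 := by rw [hnil]; rfl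
          rw [Walk.length_append] at this
          have hppos : 1 ≤ p.length := by
            rcases Nat.eq_zero_or_pos p.length with h | h
            · exact absurd (Walk.eq_of_length_eq_zero h) huv
            · exact h
          omega
        · have hsupp : (p.append q.reverse).support.tail
              = p.support.tail ++ q.reverse.support.tail := by
            rw [Walk.support_append, Walk.support_eq_cons p]
            rfl
          rw [hsupp]
          have hpt : p.support.tail.Nodup ∧ u ∉ p.support.tail := by
            have := hp.support_nodup
            rw [Walk.support_eq_cons p] at this
            exact ⟨(List.nodup_cons.mp this).2, (List.nodup_cons.mp this).1⟩
          have hqrev : q.reverse.support.tail.Nodup ∧ v ∉ q.reverse.support.tail := by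
            have := hq.reverse.support_nodup
            rw [Walk.support_eq_cons q.reverse] at this
            exact ⟨(List.nodup_cons.mp this).2, (List.nodup_cons.mp this).1⟩
          refine List.Nodup.append hpt.1 hqrev.1 ?_
          intro w hw1 hw2
          have hwp : w ∈ p.support := List.mem_of_mem_tail hw1
          have hwq : w ∈ q.support := by
            have := List.mem_of_mem_tail hw2
            rw [Walk.support_reverse, List.mem_reverse] at this
            exact this
          rcases hshared w hwp hwq with rfl | rfl
          · exact hpt.2 hw1
          · exact hqrev.2 hw2
      · rw [Walk.length_append, Walk.length_reverse]

/-- Let `G` be a finite simple graph with girth `g` and `H` a connected subgraph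
of `G` whose diameter `D₀` satisfies `2·D₀ < g`. Then for all vertices `u, v` of `H`, the
shortest-path distance between `u` and `v` within `H` equals their shortest-path distance in
`G`. -/
theorem stmt5 (V : Type) [Fintype V] (G : SimpleGraph V) (g : ℕ∞) (hg : G.egirth = g)
    (H : G.Subgraph) (hconn : H.Connected)
    (D₀ : ℕ) (hdiam : H.coe.diam = D₀)
    (hlt : ((2 * D₀ : ℕ) : ℕ∞) < g) :
    ∀ u v : H.verts, H.coe.dist u v = G.dist (u : V) (v : V) := by
  intro u v
  have hconn' : H.coe.Connected := hconn.coe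
  have hr : H.coe.Reachable u v := hconn' u v
  obtain ⟨q0, hq0, hq0len⟩ := hr.exists_path_of_dist
  set q : G.Walk (u : V) (v : V) := q0.map H.hom with hqdef
  have hqpath : q.IsPath := Walk.map_isPath_of_injective Subgraph.hom_injective hq0
  have hqlen : q.length = H.coe.dist u v := by rw [hqdef]; exact (Walk.length_map _ _).trans hq0len
  have d1 : G.dist (u : V) (v : V) ≤ H.coe.dist u v := by
    rw [← hqlen]; exact SimpleGraph.dist_le q
  by_contra hne
  have h2 : G.dist (u : V) (v : V) < H.coe.dist u v := lt_of_le_of_ne d1 (Ne.symm hne)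
  obtain ⟨p, hppath, hplen⟩ := Reachable.exists_path_of_dist ⟨q⟩
  have hpq : p ≠ q := by
    intro h
    rw [h, hqlen] at hplen
    omega
  obtain ⟨a, c, hc, hclen⟩ :=
    cycle_of_two_paths (p.length + q.length) p q hppath hqpath hpq le_rfl
  -- H.coe.dist u v ≤ D₀
  have hnonempty : Nonempty H.verts := hconn'.nonempty
  have hfin : Finite H.verts := Subtype.finite
  have hediam : H.coe.ediam ≠ ⊤ := by
    obtain ⟨x, y, hxy⟩ := exists_edist_eq_ediam_of_finite (G := H.coe)
    rw [← hxy]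
    exact edist_ne_top_iff_reachable.mpr (hconn' x y)
  have hb : H.coe.dist u v ≤ D₀ := hdiam ▸ dist_le_diam hediam
  have hsmall : c.length < 2 * D₀ := by
    rw [hplen] at hclen
    rw [hqlen] at hclen
    omega
  have hge : G.egirth ≤ c.length := (le_egirth.mp le_rfl) a c hc
  rw [hg] at hge
  have : (c.length : ℕ∞) < ((2 * D₀ : ℕ) : ℕ∞) := Nat.cast_lt.mpr hsmall
  exact absurd (lt_of_le_of_lt hge (lt_trans this hlt)) (lt_irrefl g)
end

section
/- Let G be a finite connected simple graph, let R ≥ 1 be a real number, and let S be a maximal independent set of the power graph G^{≤R}. Consider the Voronoi clustering vor(S), and for s ∈ S let 𝒞(s) denote the Voronoi cell centered at s. Then for every s ∈ S: every vertex v with d_G(v,s) ≤ R/2 belongs to 𝒞(s), and every vertex of 𝒞(s) is at distance at most R from s; that is, B_{R/2}(s) ⊆ 𝒞(s) ⊆ B_R(s). -/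
open SimpleGraph

/-- The cluster graph (quotient graph) of a clustering given as a setoid:
two distinct clusters are adjacent iff some edge of `G` has one endpoint in each. -/
def clusterGraph {V : Type*} (G : SimpleGraph V) (c : Setoid V) :
    SimpleGraph (Quotient c) where
  Adj x y := x ≠ y ∧ ∃ u v : V, G.Adj u v ∧ Quotient.mk c u = x ∧ Quotient.mk c v = y
  symm := by
    constructor
    rintro x y ⟨hxy, u, v, h1, h2, h3⟩
    exact ⟨hxy.symm, v, u, h1.symm, h3, h2⟩
  loopless := by
    constructor
    rintro x ⟨hx, -⟩
    exact hx rfl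

/-- A clustering: each equivalence class induces a connected subgraph. -/
def IsClustering {V : Type*} (G : SimpleGraph V) (c : Setoid V) : Prop :=
  ∀ v : V, (G.induce {u | c.r u v}).Connected

/-- `C` bounds the distance distortion of the clustering `c` at scale `R`:
(i) for all `v w`, `1/C ≤ (1 + d(v,w)/R)/(1 + d'([v],[w])) ≤ C`, and
(ii) the diameter of the subgraph induced by each cluster is at most `C * R`. -/
def DistortionLE {V : Type*} (G : SimpleGraph V) (c : Setoid V) (R C : ℝ) : Prop :=
  (∀ v w : V,
      1 / C ≤ (1 + (G.dist v w : ℝ) / R) /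
          (1 + ((clusterGraph G c).dist (Quotient.mk c v) (Quotient.mk c w) : ℝ)) ∧
      (1 + (G.dist v w : ℝ) / R) /
          (1 + ((clusterGraph G c).dist (Quotient.mk c v) (Quotient.mk c w) : ℝ)) ≤ C) ∧
  (∀ v u w : V, ∀ hu : c.r u v, ∀ hw : c.r w v,
      ((G.induce {x | c.r x v}).dist ⟨u, hu⟩ ⟨w, hw⟩ : ℝ) ≤ C * R)

/-- The power graph `G^{≤R}`: `u ≠ v` adjacent iff their graph distance is at most `R`. -/
def powerGraph {V : Type*} (G : SimpleGraph V) (R : ℝ) : SimpleGraph V where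
  Adj u v := u ≠ v ∧ (G.dist u v : ℝ) ≤ R
  symm := by
    constructor
    rintro u v ⟨h1, h2⟩
    exact ⟨h1.symm, by rwa [SimpleGraph.dist_comm]⟩
  loopless := by
    constructor
    rintro u ⟨h, -⟩
    exact h rfl

/-- `S` is an independent set of the graph `H`. -/
def IsIndepSetOf {V : Type*} (H : SimpleGraph V) (S : Set V) : Prop :=
  ∀ u ∈ S, ∀ v ∈ S, ¬ H.Adj u v

/-- `S` is a maximal independent set of the graph `H`. -/
def IsMaximalIndepSet {V : Type*} (H : SimpleGraph V) (S : Set V) : Prop :=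
  IsIndepSetOf H S ∧ ∀ v : V, v ∉ S → ∃ u ∈ S, H.Adj v u

/-- `G^{≤R}` has bounded independence with parameters `γ, k`: every independent set of
`G^{≤R}` contained in a ball `B_{rR}(v)` has size at most `γ * r ^ k`. -/
def HasBoundedIndependence {V : Type*} (G : SimpleGraph V) (R γ k : ℝ) : Prop :=
  ∀ v : V, ∀ r : ℝ, 0 < r → ∀ S : Set V,
    IsIndepSetOf (powerGraph G R) S →
    (∀ u ∈ S, (G.dist u v : ℝ) ≤ r * R) →
    (S.ncard : ℝ) ≤ γ * r ^ k

/-- `f` is the cluster-center map of the Voronoi clustering `vor(S)` with tie-breaking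
by the injective identifier `ID`. -/
def IsVoronoiMap {V : Type*} (G : SimpleGraph V) (S : Set V) (ID : V → ℕ) (f : V → V) : Prop :=
  ∀ v : V, f v ∈ S ∧ ∀ s ∈ S,
    G.dist (f v) v < G.dist s v ∨ (G.dist (f v) v = G.dist s v ∧ ID (f v) ≤ ID s)

/-- `f` is the cluster-center map of the additively weighted Voronoi clustering `vor(S, W)`
with tie-breaking by the injective identifier `ID`. -/
def IsWeightedVoronoiMap {V : Type*} (G : SimpleGraph V) (S : Set V) (W : V → ℝ)
    (ID : V → ℕ) (f : V → V) : Prop :=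
  ∀ v : V, f v ∈ S ∧ ∀ s ∈ S,
    ((G.dist (f v) v : ℝ) - W (f v) < (G.dist s v : ℝ) - W s) ∨
    ((G.dist (f v) v : ℝ) - W (f v) = (G.dist s v : ℝ) - W s ∧ ID (f v) ≤ ID s)

/-! Since any two centres are more than `R` apart, a vertex within `R/2` of `s` is strictly
closer to `s` than to every other centre; and maximality means every vertex is within `R` of
some centre, hence within `R` of its own (nearest) centre. -/

section

variable {V : Type*} {G : SimpleGraph V}

theorem IsVoronoiMap.dist_le {S : Set V} {ID : V → ℕ} {f : V → V} (hf : IsVoronoiMap G S ID f)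
    {t : V} (ht : t ∈ S) (v : V) : G.dist (f v) v ≤ G.dist t v := by
  rcases (hf v).2 t ht with h | ⟨h, -⟩
  · exact h.le
  · exact h.le

theorem IsIndepSetOf.eq_of_dist_le {R : ℝ} {S : Set V} (hS : IsIndepSetOf (powerGraph G R) S)
    {s t : V} (hs : s ∈ S) (ht : t ∈ S) (hst : (G.dist s t : ℝ) ≤ R) : s = t := by
  by_contra hne
  exact hS s hs t ht ⟨hne, hst⟩

theorem IsMaximalIndepSet.exists_dist_le {R : ℝ} {S : Set V}
    (hS : IsMaximalIndepSet (powerGraph G R) S) (hR : 0 ≤ R) (v : V) :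
    ∃ u ∈ S, (G.dist v u : ℝ) ≤ R := by
  by_cases hv : v ∈ S
  · exact ⟨v, hv, by simpa using hR⟩
  · obtain ⟨u, hu, -, hvu⟩ := hS.2 v hv
    exact ⟨u, hu, hvu⟩

end

theorem stmt6_general (V : Type) (G : SimpleGraph V) (hG : G.Connected)
    (R : ℝ) (hR : 1 ≤ R)
    (S : Set V) (hS : IsMaximalIndepSet (powerGraph G R) S)
    (ID : V → ℕ)
    (f : V → V) (hf : IsVoronoiMap G S ID f) :
    ∀ s ∈ S,
      (∀ v : V, (G.dist v s : ℝ) ≤ R / 2 → f v = s) ∧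
      (∀ v : V, f v = s → (G.dist v s : ℝ) ≤ R) := by
  intro s hs
  refine ⟨fun v hv => ?_, fun v hv => ?_⟩
  · have hnear : (G.dist (f v) v : ℝ) ≤ G.dist v s := by
      rw [SimpleGraph.dist_comm (u := v)]
      exact_mod_cast hf.dist_le hs v
    have htri : (G.dist (f v) s : ℝ) ≤ G.dist (f v) v + G.dist v s := by
      exact_mod_cast hG.dist_triangle
    exact hS.1.eq_of_dist_le (hf v).1 hs (by linarith)
  · obtain ⟨u, hu, hvu⟩ := hS.exists_dist_le (by linarith) v
    calc (G.dist v s : ℝ) = G.dist (f v) v := by rw [← hv, SimpleGraph.dist_comm]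
      _ ≤ G.dist u v := by exact_mod_cast hf.dist_le hu v
      _ = G.dist v u := by rw [SimpleGraph.dist_comm]
      _ ≤ R := hvu

/-- Let `G` be a finite connected simple graph, `R ≥ 1`, and `S` a maximal
independent set of `G^{≤R}`. In the Voronoi clustering `vor(S)` (with cluster-center map `f`),
for every `s ∈ S` the Voronoi cell `𝒞(s) = {v | f v = s}` satisfies
`B_{R/2}(s) ⊆ 𝒞(s) ⊆ B_R(s)`. -/
theorem stmt6 (V : Type) [Fintype V] (G : SimpleGraph V) (hG : G.Connected)
    (R : ℝ) (hR : 1 ≤ R)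
    (S : Set V) (hS : IsMaximalIndepSet (powerGraph G R) S)
    (ID : V → ℕ) (hID : Function.Injective ID)
    (f : V → V) (hf : IsVoronoiMap G S ID f) :
    ∀ s ∈ S,
      (∀ v : V, (G.dist v s : ℝ) ≤ R / 2 → f v = s) ∧
      (∀ v : V, f v = s → (G.dist v s : ℝ) ≤ R) :=
  stmt6_general V G hG R hR S hS ID f hf
end

section
/- There is a function C₀(γ,k) of γ, k alone such that the following holds. Let G be a finite connected simple graph and R ≥ 1 a real number such that G^{≤R} has bounded independence with parameters γ, k > 0. Let S be a maximal independent set of G^{≤R}, let 0 ≤ C < 1, and let W : S → [0, C·R] be any weight function. Then the additively weighted Voronoi clustering vor(S, W) has distance distortion at most C₀(γ,k) at scale R. -/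
open SimpleGraph

section Aux
variable {V : Type*} {G : SimpleGraph V}

private lemma step_lemma (hG : G.Connected) {u w : V} (h : u ≠ w) :
    ∃ u' : V, G.Adj u u' ∧ G.dist u' w + 1 = G.dist u w := by
  have hpos : 0 < G.dist u w := hG.pos_dist_of_ne h
  obtain ⟨p, hp⟩ := hG.exists_walk_length_eq_dist u w
  cases p with
  | nil => simp at hp; rw [SimpleGraph.dist_self] at hpos; omega
  | @cons _ u' _ hadj q =>
    refine ⟨u', hadj, ?_⟩
    have h1 : G.dist u' w ≤ q.length := dist_le q
    have h2 : G.dist u w ≤ 1 + G.dist u' w := by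
      calc G.dist u w ≤ G.dist u u' + G.dist u' w := hG.dist_triangle
        _ ≤ 1 + G.dist u' w := by
            have : G.dist u u' = 1 := by rwa [dist_eq_one_iff_adj]
            omega
    simp [Walk.length_cons] at hp
    omega

private lemma mid_lemma (hG : G.Connected) (m : ℕ) : ∀ v w : V, m ≤ G.dist v w →
    ∃ u : V, G.dist v u = m ∧ G.dist u w + m = G.dist v w := by
  induction m with
  | zero => intro v w _; exact ⟨v, by simp, by simp⟩
  | succ m ih =>
    intro v w hm
    obtain ⟨u, hu1, hu2⟩ := ih v w (by omega)
    have hne : u ≠ w := by rintro rfl; rw [SimpleGraph.dist_self] at hu2; omega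
    obtain ⟨u', ha, hd⟩ := step_lemma hG hne
    refine ⟨u', ?_, by omega⟩
    have h1 : G.dist v u' ≤ m + 1 := by
      calc G.dist v u' ≤ G.dist v u + G.dist u u' := hG.dist_triangle
        _ ≤ m + 1 := by
            have : G.dist u u' = 1 := by rwa [dist_eq_one_iff_adj]
            omega
    have h2 : G.dist v w ≤ G.dist v u' + G.dist u' w := hG.dist_triangle
    omega

private lemma induce_walk (s : Set V) : ∀ {a b : V}, ∀ p : G.Walk a b,
    (∀ x ∈ p.support, x ∈ s) → ∀ (ha : a ∈ s) (hb : b ∈ s),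
    ∃ q : (G.induce s).Walk ⟨a, ha⟩ ⟨b, hb⟩, q.length = p.length := by
  intro a b p
  induction p with
  | nil => intro _ ha hb; exact ⟨Walk.nil, rfl⟩
  | @cons u x w hadj q ih =>
    intro hsup ha hb
    have hx : x ∈ s := hsup x (by simp)
    obtain ⟨q', hq'⟩ := ih (fun y hy => hsup y (by simp [hy])) hx hb
    exact ⟨Walk.cons (by exact hadj : (G.induce s).Adj ⟨u, ha⟩ ⟨x, hx⟩) q', by exact congrArg (· + 1) hq'⟩

private lemma cluster_walk (c : Setoid V) : ∀ {a b : V}, ∀ p : G.Walk a b,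
    ∃ q : (clusterGraph G c).Walk (Quotient.mk c a) (Quotient.mk c b),
      ∀ x ∈ q.support, ∃ y ∈ p.support, Quotient.mk c y = x := by
  intro a b p
  induction p with
  | nil => exact ⟨Walk.nil, by simp⟩
  | @cons u x w hadj q ih =>
    obtain ⟨q', hq'⟩ := ih
    by_cases hux : Quotient.mk c u = Quotient.mk c x
    · refine ⟨q'.copy hux.symm rfl, ?_⟩
      intro z hz
      rw [Walk.support_copy] at hz
      obtain ⟨y, hy1, hy2⟩ := hq' z hz
      exact ⟨y, by simp [hy1], hy2⟩
    · refine ⟨Walk.cons ⟨hux, u, x, hadj, rfl, rfl⟩ q', ?_⟩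
      intro z hz
      replace hz : z = Quotient.mk c u ∨ z ∈ q'.support := List.mem_cons.mp hz
      rcases hz with hz | hz
      · exact ⟨u, by simp, hz.symm⟩
      · obtain ⟨y, hy1, hy2⟩ := hq' z hz
        exact ⟨y, by simp [hy1], hy2⟩

end Aux

set_option maxHeartbeats 1000000 in
/-- There is a function `C₀(γ,k)` of `γ, k` alone such that: if `G` is a finite
connected simple graph and `R ≥ 1` is such that `G^{≤R}` has bounded independence with
parameters `γ, k > 0`, `S` is a maximal independent set of `G^{≤R}`, `0 ≤ C < 1` and
`W : S → [0, C·R]` is any weight function, then the additively weighted Voronoi clustering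
`vor(S, W)` has distance distortion at most `C₀(γ,k)` at scale `R`. -/
theorem stmt9 :
    ∃ C₀ : ℝ → ℝ → ℝ, (∀ γ k : ℝ, 1 ≤ C₀ γ k) ∧
      ∀ (V : Type) [Fintype V] (G : SimpleGraph V), G.Connected →
      ∀ R : ℝ, 1 ≤ R → ∀ γ k : ℝ, 0 < γ → 0 < k →
      HasBoundedIndependence G R γ k →
      ∀ S : Set V, IsMaximalIndepSet (powerGraph G R) S →
      ∀ C : ℝ, 0 ≤ C → C < 1 →
      ∀ W : V → ℝ, (∀ s ∈ S, W s ∈ Set.Icc (0 : ℝ) (C * R)) →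
      ∀ ID : V → ℕ, Function.Injective ID →
      ∀ f : V → V, IsWeightedVoronoiMap G S W ID f →
      DistortionLE G (Setoid.ker f) R (C₀ γ k) := by
  classical
  refine ⟨fun γ k => max 6 (1 + 2 * (γ * (3:ℝ) ^ k)),
    fun γ k => le_trans (by norm_num) (le_max_left _ _), ?_⟩
  intro V _ G hG R hR γ k hγ hk hBI S hS C hC0 hC1 W hW ID hID f hf
  set c : Setoid V := Setoid.ker f with hc
  set M : ℝ := γ * (3:ℝ) ^ k with hMdef
  have hM0 : 0 < M := mul_pos hγ (Real.rpow_pos_of_pos (by norm_num) k)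
  set C₀ : ℝ := max 6 (1 + 2 * M) with hC₀def
  have hC6 : (6:ℝ) ≤ C₀ := le_max_left _ _
  have hC2M : 1 + 2 * M ≤ C₀ := le_max_right _ _
  have hC₀pos : (0:ℝ) < C₀ := by linarith
  have hR0 : (0:ℝ) < R := by linarith
  have hfS : ∀ v, f v ∈ S := fun v => (hf v).1
  have hmin : ∀ v, ∀ s ∈ S, (G.dist (f v) v : ℝ) - W (f v) ≤ (G.dist s v : ℝ) - W s := by
    intro v s hs
    rcases (hf v).2 s hs with h | ⟨h, -⟩
    · exact le_of_lt h
    · exact le_of_eq h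
  have hWnn : ∀ s ∈ S, 0 ≤ W s := fun s hs => (hW s hs).1
  have hWle : ∀ s ∈ S, W s ≤ C * R := fun s hs => (hW s hs).2
  -- every vertex is within 2R of its center
  have hcenter : ∀ v, (G.dist (f v) v : ℝ) ≤ 2 * R := by
    intro v
    have hWfv := hWle (f v) (hfS v)
    have hWfv0 := hWnn (f v) (hfS v)
    by_cases hv : v ∈ S
    · have h := hmin v v hv
      rw [SimpleGraph.dist_self] at h
      have := hWnn v hv
      push_cast at h
      nlinarith
    · obtain ⟨u, hu, hadj⟩ := hS.2 v hv
      have h := hmin v u hu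
      have hdu : (G.dist u v : ℝ) ≤ R := by
        rw [SimpleGraph.dist_comm]
        exact hadj.2
      have := hWnn u hu
      nlinarith
  -- vertices on geodesics from the center stay in the cluster
  have hB : ∀ v u : V, G.dist (f v) u + G.dist u v = G.dist (f v) v → f u = f v := by
    intro v u hgeo
    have hgeoR : (G.dist (f v) u : ℝ) + G.dist u v = G.dist (f v) v := by exact_mod_cast hgeo
    have key1 : ∀ s ∈ S, (G.dist (f v) u : ℝ) - W (f v) ≤ (G.dist s u : ℝ) - W s := by
      intro s hs
      have htri : (G.dist s v : ℝ) ≤ (G.dist s u : ℝ) + (G.dist u v : ℝ) := by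
        exact_mod_cast hG.dist_triangle
      have h1 := hmin v s hs
      linarith
    have key1' := key1 (f u) (hfS u)
    rcases (hf u).2 (f v) (hfS v) with h | ⟨heq, hID1⟩
    · linarith
    · have htri2 : (G.dist (f u) v : ℝ) ≤ (G.dist (f u) u : ℝ) + (G.dist u v : ℝ) := by
        exact_mod_cast hG.dist_triangle
      have hminv := hmin v (f u) (hfS u)
      have heqv : (G.dist (f v) v : ℝ) - W (f v) = (G.dist (f u) v : ℝ) - W (f u) := by
        linarith
      rcases (hf v).2 (f u) (hfS u) with h' | ⟨-, hID2⟩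
      · linarith
      · exact hID (le_antisymm hID1 hID2)
  have hgeo_support : ∀ v : V, ∀ p : G.Walk (f v) v, p.length = G.dist (f v) v →
      ∀ z ∈ p.support, f z = f v := by
    intro v p hp z hz
    apply hB
    have h1 : G.dist (f v) z ≤ (p.takeUntil z hz).length := dist_le _
    have h2 : G.dist z v ≤ (p.dropUntil z hz).length := dist_le _
    have h3 : (p.takeUntil z hz).length + (p.dropUntil z hz).length = p.length := by
      have h := congrArg Walk.length (p.take_spec hz)
      rwa [Walk.length_append] at h
    have h4 : G.dist (f v) v ≤ G.dist (f v) z + G.dist z v := hG.dist_triangle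
    omega
  -- two vertices in the same cluster are within 4R
  have hintra : ∀ x y : V, f x = f y → (G.dist x y : ℝ) ≤ 4 * R := by
    intro x y hxy
    have htri : G.dist x y ≤ G.dist x (f x) + G.dist (f x) y := hG.dist_triangle
    rw [show G.dist x (f x) = G.dist (f x) x from SimpleGraph.dist_comm, hxy] at htri
    have h1 := hcenter x
    have h2 := hcenter y
    rw [hxy] at h1
    have : (G.dist x y : ℝ) ≤ (G.dist (f y) x : ℝ) + (G.dist (f y) y : ℝ) := by
      exact_mod_cast htri
    linarith
  have hker : ∀ x y : V, Quotient.mk c x = Quotient.mk c y → f x = f y := by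
    intro x y h
    exact Setoid.ker_def.mp (Quotient.exact h)
  -- cluster graph is connected
  have hCG : (clusterGraph G c).Connected := by
    have hne : Nonempty V := hG.nonempty
    rw [connected_iff]
    constructor
    · intro x y
      induction x using Quotient.inductionOn with | _ a => ?_
      induction y using Quotient.inductionOn with | _ b => ?_
      obtain ⟨p⟩ := hG.preconnected a b
      obtain ⟨q, -⟩ := cluster_walk c p
      exact ⟨q⟩
    · exact ⟨Quotient.mk c hne.some⟩
  -- distance upper bound along cluster walks
  have hupper : ∀ (x y : Quotient c) (p : (clusterGraph G c).Walk x y), ∀ v w : V,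
      Quotient.mk c v = x → Quotient.mk c w = y →
      (G.dist v w : ℝ) ≤ ((p.length : ℝ) + 1) * (4 * R + 1) := by
    intro x y p
    induction p with
    | nil =>
      intro v w hv hw
      have h := hintra v w (hker v w (hv.trans hw.symm))
      simp only [Walk.length_nil]
      push_cast
      nlinarith
    | @cons x z y hadj rest ih =>
      intro v w hv hw
      obtain ⟨hne2, a, b, hab, ha, hb⟩ := id hadj
      have h1 : (G.dist v a : ℝ) ≤ 4 * R := hintra v a (hker v a (hv.trans ha.symm))
      have h2 := ih b w hb hw
      have h3 : G.dist a b = 1 := by rwa [dist_eq_one_iff_adj]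
      have t1 : G.dist v w ≤ G.dist v a + G.dist a w := hG.dist_triangle
      have t2 : G.dist a w ≤ G.dist a b + G.dist b w := hG.dist_triangle
      have tc : (G.dist v w : ℝ) ≤ (G.dist v a : ℝ) + 1 + (G.dist b w : ℝ) := by
        rw [h3] at t2
        exact_mod_cast le_trans t1 (by omega)
      simp only [Walk.length_cons]
      push_cast
      nlinarith [Nat.cast_nonneg (α := ℝ) rest.length]
  -- a single segment of length ≤ R crosses at most M clusters
  have hseg : ∀ v w : V, (G.dist v w : ℝ) ≤ R →
      ((clusterGraph G c).dist (Quotient.mk c v) (Quotient.mk c w) : ℝ) + 1 ≤ M := by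
    intro v w hvw
    obtain ⟨p, hp⟩ := hG.exists_walk_length_eq_dist v w
    obtain ⟨q, hq⟩ := cluster_walk c p
    set T : Set V := f '' {y | y ∈ p.support} with hT
    have hTS : T ⊆ S := by rintro - ⟨y, -, rfl⟩; exact hfS y
    have hTind : IsIndepSetOf (powerGraph G R) T :=
      fun a haT b hbT => hS.1 a (hTS haT) b (hTS hbT)
    have hTball : ∀ s ∈ T, (G.dist s v : ℝ) ≤ 3 * R := by
      rintro - ⟨y, hy, rfl⟩
      have h1 : G.dist v y ≤ p.length :=
        le_trans (dist_le (p.takeUntil y hy)) (Walk.length_takeUntil_le p hy)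
      rw [hp] at h1
      have h2 : (G.dist v y : ℝ) ≤ R := le_trans (by exact_mod_cast h1) hvw
      have h3 := hcenter y
      have h4 : G.dist (f y) v ≤ G.dist (f y) y + G.dist y v := hG.dist_triangle
      have h4c : (G.dist (f y) v : ℝ) ≤ (G.dist (f y) y : ℝ) + (G.dist y v : ℝ) := by
        exact_mod_cast h4
      rw [SimpleGraph.dist_comm] at h2
      linarith
    have hcard : (T.ncard : ℝ) ≤ M := hBI v 3 (by norm_num) T hTind hTball
    -- count distinct clusters via the injective center map
    set ctr : Quotient c → V := Quotient.lift f (fun a b h => Setoid.ker_def.mp h) with hctr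
    have hctrinj : Function.Injective ctr := by
      intro x y hxy
      induction x using Quotient.inductionOn with | _ a => ?_
      induction y using Quotient.inductionOn with | _ b => ?_
      exact Quotient.sound (Setoid.ker_def.mpr hxy)
    set L := q.bypass.support with hL
    have hnodup : L.Nodup := q.bypass_isPath.support_nodup
    have hmapnodup : (L.map ctr).Nodup := hnodup.map hctrinj
    have hsub : ∀ z ∈ L.map ctr, z ∈ T := by
      intro z hz
      obtain ⟨x, hx, rfl⟩ := List.mem_map.mp hz
      obtain ⟨y, hy1, hy2⟩ := hq x (q.support_bypass_subset hx)
      subst hy2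
      exact ⟨y, hy1, rfl⟩
    have h5 : (L.map ctr).toFinset.card = (L.map ctr).length :=
      List.toFinset_card_of_nodup hmapnodup
    have h6 : ((L.map ctr).toFinset : Set V) ⊆ T := by
      intro z hz
      exact hsub z (by simpa using hz)
    have h7 : ((L.map ctr).toFinset.card : ℝ) ≤ (T.ncard : ℝ) := by
      have := Set.ncard_le_ncard h6 (Set.toFinite T)
      rw [Set.ncard_coe_finset] at this
      exact_mod_cast this
    have h8 : (clusterGraph G c).dist (Quotient.mk c v) (Quotient.mk c w) ≤ q.bypass.length :=
      dist_le q.bypass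
    have h9 : L.length = q.bypass.length + 1 := Walk.length_support _
    have h10 : (L.map ctr).length = L.length := List.length_map _
    have h11 : ((clusterGraph G c).dist (Quotient.mk c v) (Quotient.mk c w) : ℝ) + 1 ≤
        ((L.map ctr).toFinset.card : ℝ) := by
      rw [h5, h10]
      exact_mod_cast by omega
    linarith
  -- segmentation claim
  set m : ℕ := ⌊R⌋₊ with hm
  have hm1 : 1 ≤ m := Nat.le_floor (by exact_mod_cast hR)
  have hmR : (m : ℝ) ≤ R := Nat.floor_le (by linarith)
  have hm1R : (1:ℝ) ≤ (m:ℝ) := by exact_mod_cast hm1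
  have hRm : R ≤ 2 * m := by
    have := Nat.lt_floor_add_one R
    push_cast at this
    linarith
  have hclaim : ∀ j : ℕ, ∀ v w : V, G.dist v w ≤ j * m →
      ((clusterGraph G c).dist (Quotient.mk c v) (Quotient.mk c w) : ℝ) ≤ M * j := by
    intro j
    induction j with
    | zero =>
      intro v w h
      have hvw : v = w := hG.dist_eq_zero_iff.mp (by omega)
      subst hvw
      rw [SimpleGraph.dist_self]
      simp
    | succ j ih =>
      intro v w h
      by_cases hd : G.dist v w ≤ j * m
      · have h1 := ih v w hd
        have : (j:ℝ) ≤ ((j:ℕ)+1 : ℕ) := by push_cast; linarith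
        push_cast
        push_cast at h1
        nlinarith
      · push_neg at hd
        have hmul : (j+1) * m = j * m + m := by ring
        obtain ⟨u, hu1, hu2⟩ := mid_lemma hG (G.dist v w - j*m) v w (by omega)
        have hvu : (G.dist v u : ℝ) ≤ R := by
          have hle : G.dist v u ≤ m := by omega
          calc (G.dist v u : ℝ) ≤ (m:ℝ) := by exact_mod_cast hle
            _ ≤ R := hmR
        have h1 := hseg v u hvu
        have h2 := ih u w (by omega)
        have htri : (clusterGraph G c).dist (Quotient.mk c v) (Quotient.mk c w) ≤
            (clusterGraph G c).dist (Quotient.mk c v) (Quotient.mk c u) +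
            (clusterGraph G c).dist (Quotient.mk c u) (Quotient.mk c w) := hCG.dist_triangle
        have htriR : ((clusterGraph G c).dist (Quotient.mk c v) (Quotient.mk c w) : ℝ) ≤
            ((clusterGraph G c).dist (Quotient.mk c v) (Quotient.mk c u) : ℝ) +
            ((clusterGraph G c).dist (Quotient.mk c u) (Quotient.mk c w) : ℝ) := by
          exact_mod_cast htri
        push_cast
        nlinarith
  constructor
  · -- part (i)
    intro v w
    obtain ⟨D, hD⟩ : ∃ n : ℕ, G.dist v w = n := ⟨_, rfl⟩
    obtain ⟨D', hD'⟩ : ∃ n : ℕ,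
        (clusterGraph G c).dist (Quotient.mk c v) (Quotient.mk c w) = n := ⟨_, rfl⟩
    rw [hD, hD']
    have hd0 : (0:ℝ) ≤ (D:ℝ) := Nat.cast_nonneg _
    have hd'0 : (0:ℝ) ≤ (D':ℝ) := Nat.cast_nonneg _
    have htR : ((D:ℝ) / R) * R = (D:ℝ) := div_mul_cancel₀ _ hR0.ne'
    have ht0 : (0:ℝ) ≤ (D:ℝ) / R := div_nonneg hd0 hR0.le
    have hB1 : (0:ℝ) < 1 + (D':ℝ) := by linarith
    have hA1 : (0:ℝ) < 1 + (D:ℝ) / R := by linarith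
    have hwup : (D:ℝ) ≤ ((D':ℝ) + 1) * (4 * R + 1) := by
      obtain ⟨q, hq⟩ := (hCG.preconnected (Quotient.mk c v)
        (Quotient.mk c w)).exists_walk_length_eq_dist
      have h := hupper _ _ q v w rfl rfl
      rw [hq, hD', hD] at h
      exact h
    have hlow : 1 + (D':ℝ) ≤ C₀ * (1 + (D:ℝ) / R) := by
      have hmul : (D/m + 1) * m = D/m*m + m := by ring
      have hDle : D ≤ (D/m + 1) * m := by
        have h1 := Nat.div_add_mod D m
        have h2 : D % m < m := Nat.mod_lt D (show 0 < m by omega)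
        have h3 : m * (D/m) = D/m*m := Nat.mul_comm _ _
        omega
      have hcl := hclaim (D/m + 1) v w (hD ▸ hDle)
      rw [hD'] at hcl
      have hem : ((D/m : ℕ) : ℝ) * (m:ℝ) ≤ (D:ℝ) := by
        have h := Nat.div_mul_le_self D m
        exact_mod_cast h
      have he2t : ((D/m : ℕ) : ℝ) ≤ 2 * ((D:ℝ)/R) := by
        have h1 : ((D/m:ℕ):ℝ) * (m:ℝ) ≤ (2 * ((D:ℝ)/R)) * (m:ℝ) := by
          linarith [hem, htR, mul_le_mul_of_nonneg_left hRm ht0]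
        exact le_of_mul_le_mul_right h1 (by linarith)
      push_cast at hcl
      linarith [hcl, mul_le_mul_of_nonneg_left he2t hM0.le,
        mul_nonneg (show (0:ℝ) ≤ C₀ - (1 + 2*M) by linarith)
          (show (0:ℝ) ≤ 1 + (D:ℝ)/R by linarith), hM0.le, ht0]
    have hup : 1 + (D:ℝ)/R ≤ C₀ * (1 + (D':ℝ)) := by
      have h1 : (1 + (D:ℝ)/R) * R ≤ (C₀ * (1 + (D':ℝ))) * R := by
        linarith [htR, hwup, mul_nonneg (sub_nonneg.mpr hR) hd'0,
          mul_le_mul_of_nonneg_right hC6 (show (0:ℝ) ≤ (1 + (D':ℝ)) * R by positivity)]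
      exact le_of_mul_le_mul_right h1 hR0
    constructor
    · rw [div_le_div_iff₀ hC₀pos hB1]
      linarith
    · rw [div_le_iff₀ hB1]
      linarith
  · -- part (ii)
    intro v u w hu hw
    have hu' : f u = f v := hu
    have hw' : f w = f v := hw
    obtain ⟨p1, hp1⟩ := hG.exists_walk_length_eq_dist (f u) u
    obtain ⟨p2, hp2⟩ := hG.exists_walk_length_eq_dist (f w) w
    have hfufw : f w = f u := hw'.trans hu'.symm
    set p2' : G.Walk (f u) w := p2.copy hfufw rfl with hp2'
    set bigp : G.Walk u w := p1.reverse.append p2' with hbigp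
    have hsup : ∀ x ∈ bigp.support, x ∈ {x | c.r x v} := by
      intro x hx
      rw [Walk.mem_support_append_iff] at hx
      rcases hx with hx | hx
      · rw [Walk.support_reverse, List.mem_reverse] at hx
        have : f x = f u := hgeo_support u p1 hp1 x hx
        exact (this.trans hu' : f x = f v)
      · rw [Walk.support_copy] at hx
        have : f x = f w := hgeo_support w p2 hp2 x hx
        exact (this.trans hw' : f x = f v)
    obtain ⟨q, hqlen⟩ := induce_walk {x | c.r x v} bigp hsup hu hw
    have hdle : ((G.induce {x | c.r x v}).dist ⟨u, hu⟩ ⟨w, hw⟩ : ℝ) ≤ (q.length : ℝ) := by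
      exact_mod_cast dist_le q
    have hlen : (q.length : ℝ) = (G.dist (f u) u : ℝ) + (G.dist (f w) w : ℝ) := by
      rw [hqlen, hbigp, Walk.length_append, Walk.length_reverse, hp2', Walk.length_copy,
        hp1, hp2]
      push_cast
      ring
    have h1 := hcenter u
    have h2 := hcenter w
    have : ((G.induce {x | c.r x v}).dist ⟨u, hu⟩ ⟨w, hw⟩ : ℝ) ≤ 4 * R := by
      rw [hlen] at hdle
      linarith
    have h4C : (4:ℝ) * R ≤ C₀ * R := by nlinarith
    linarith
end

section
/- Let G be a finite simple graph, let U ⊆ V, and let α, β ≥ 1. Suppose S is an (α, β)-ruling set for U with respect to G, let γ ≥ α, and let S' ⊆ S be maximal among subsets of S that are independent sets in G^{≤γ}. Then S' is a (γ+1, γ+β)-ruling set for U with respect to G. -/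
open SimpleGraph

/-- The power graph `G^{≤γ}` (integer threshold): `u ≠ v` adjacent iff their graph distance
(as an extended natural number) is at most `γ`. -/
def powerGraphE {V : Type*} (G : SimpleGraph V) (γ : ℕ) : SimpleGraph V where
  Adj u v := u ≠ v ∧ G.edist u v ≤ (γ : ℕ∞)
  symm := by
    constructor
    rintro u v ⟨h1, h2⟩
    exact ⟨h1.symm, by rwa [SimpleGraph.edist_comm]⟩
  loopless := by
    constructor
    rintro u ⟨h, -⟩
    exact h rfl

/-- `S` is an `(α, β)`-ruling set for `U` with respect to `G`: `S ⊆ U`, every `v ∈ U` is at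
distance at most `β` from `S`, and any two distinct elements of `S` are at distance at
least `α` in `G`. -/
def IsRulingSet {V : Type*} (G : SimpleGraph V) (U S : Set V) (α β : ℕ) : Prop :=
  S ⊆ U ∧ (∀ v ∈ U, ∃ s ∈ S, G.edist v s ≤ (β : ℕ∞)) ∧
    ∀ u ∈ S, ∀ v ∈ S, u ≠ v → (α : ℕ∞) ≤ G.edist u v

/-- Let `G` be a finite simple graph, `U ⊆ V`, `α, β ≥ 1`. Suppose `S` is an
`(α, β)`-ruling set for `U` with respect to `G`, let `γ ≥ α`, and let `S' ⊆ S` be maximal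
among subsets of `S` that are independent in `G^{≤γ}`. Then `S'` is a `(γ+1, γ+β)`-ruling
set for `U` with respect to `G`. -/
theorem stmt12 (V : Type) [Fintype V] (G : SimpleGraph V)
    (U : Set V) (α β : ℕ) (hα : 1 ≤ α) (hβ : 1 ≤ β)
    (S : Set V) (hS : IsRulingSet G U S α β)
    (γ : ℕ) (hγ : α ≤ γ)
    (S' : Set V) (hsub : S' ⊆ S)
    (hind : IsIndepSetOf (powerGraphE G γ) S')
    (hmax : ∀ x ∈ S, x ∉ S' → ∃ y ∈ S', (powerGraphE G γ).Adj x y) :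
    IsRulingSet G U S' (γ + 1) (γ + β) := by
  obtain ⟨hSU, hcov, hsep⟩ := hS
  refine ⟨fun x hx => hSU (hsub hx), ?_, ?_⟩
  · intro v hv
    obtain ⟨s, hsS, hds⟩ := hcov v hv
    by_cases hs' : s ∈ S'
    · exact ⟨s, hs', le_trans hds (by
        push_cast
        exact le_add_self)⟩
    · obtain ⟨y, hyS', hadj⟩ := hmax s hsS hs'
      refine ⟨y, hyS', ?_⟩
      calc G.edist v y ≤ G.edist v s + G.edist s y := G.edist_triangle
        _ ≤ (β : ℕ∞) + (γ : ℕ∞) := add_le_add hds hadj.2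
        _ = ((γ + β : ℕ) : ℕ∞) := by push_cast; ring
  · intro u hu v hv huv
    have hna := hind u hu v hv
    have : ¬ G.edist u v ≤ (γ : ℕ∞) := fun h => hna ⟨huv, h⟩
    push_cast
    exact Order.add_one_le_of_lt (lt_of_not_ge this)
end

section
/- Let G be a geometric graph in ℝ^k (vertices V ⊆ ℝ^k, distinct u, v adjacent iff ‖u − v‖ ≤ 1) that is 4-dense, i.e., every Euclidean ball of radius 1/4 centered at a point of the convex hull of V contains a point of V. Then for all u, v ∈ V with ‖u − v‖ > 1, the graph distance satisfies d_G(u,v) ≤ 2‖u − v‖. -/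
open SimpleGraph

/-- The geometric graph on a set `V ⊆ ℝ^k`: distinct points `u, v` are adjacent iff
`‖u − v‖ ≤ 1`. -/
def geomGraph {k : ℕ} (V : Set (EuclideanSpace ℝ (Fin k))) : SimpleGraph V where
  Adj u v := u ≠ v ∧ ‖(u : EuclideanSpace ℝ (Fin k)) - (v : EuclideanSpace ℝ (Fin k))‖ ≤ 1
  symm := by
    constructor
    rintro u v ⟨h1, h2⟩
    refine ⟨h1.symm, ?_⟩
    rwa [← norm_neg, neg_sub]
  loopless := by
    constructor
    rintro u ⟨h, -⟩
    exact h rfl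

theorem auxkey {k : ℕ} {V : Set (EuclideanSpace ℝ (Fin k))}
    (hdense : ∀ x ∈ convexHull ℝ V, ∃ p ∈ V, ‖x - p‖ ≤ 1 / 4) :
    ∀ n : ℕ, 1 ≤ n → ∀ u v : V,
      ‖(u : EuclideanSpace ℝ (Fin k)) - (v : EuclideanSpace ℝ (Fin k))‖ < (n + 1) / 2 →
      (geomGraph V).edist u v ≤ (n : ℕ∞) := by
  intro n
  induction n with
  | zero => omega
  | succ n ih =>
    intro _ u v hD
    by_cases hle : ‖(u : EuclideanSpace ℝ (Fin k)) - (v : EuclideanSpace ℝ (Fin k))‖ ≤ 1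
    · rcases eq_or_ne u v with rfl | hne
      · simp [SimpleGraph.edist_self]
      · have hadj : (geomGraph V).Adj u v := ⟨hne, hle⟩
        have h1 : (geomGraph V).edist u v ≤ 1 := by
          have := SimpleGraph.edist_le (SimpleGraph.Walk.cons hadj SimpleGraph.Walk.nil)
          simpa using this
        exact h1.trans (by exact_mod_cast Nat.succ_le_succ (Nat.zero_le n))
    · push_neg at hle
      set D := ‖(u : EuclideanSpace ℝ (Fin k)) - (v : EuclideanSpace ℝ (Fin k))‖ with hDdef
      have hDpos : 0 < D := by linarith
      have hn1 : 1 ≤ n := by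
        by_contra h
        have : n = 0 := by omega
        subst this
        norm_num at hD
        linarith
      set t : ℝ := 3 / (4 * D) with ht
      have ht0 : 0 ≤ t := by positivity
      have ht1 : t ≤ 1 := by
        rw [ht, div_le_one (by linarith)]
        linarith
      set x : EuclideanSpace ℝ (Fin k) :=
        (1 - t) • (u : EuclideanSpace ℝ (Fin k)) + t • (v : EuclideanSpace ℝ (Fin k)) with hx
      have hxhull : x ∈ convexHull ℝ V := by
        apply segment_subset_convexHull u.2 v.2
        exact ⟨1 - t, t, by linarith, ht0, by ring, rfl⟩
      obtain ⟨p, hpV, hpx⟩ := hdense x hxhull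
      have hux : (u : EuclideanSpace ℝ (Fin k)) - x =
          t • ((u : EuclideanSpace ℝ (Fin k)) - (v : EuclideanSpace ℝ (Fin k))) := by
        rw [hx]; module
      have hxv : x - (v : EuclideanSpace ℝ (Fin k)) =
          (1 - t) • ((u : EuclideanSpace ℝ (Fin k)) - (v : EuclideanSpace ℝ (Fin k))) := by
        rw [hx]; module
      have huxn : ‖(u : EuclideanSpace ℝ (Fin k)) - x‖ = 3 / 4 := by
        rw [hux, norm_smul, Real.norm_eq_abs, abs_of_nonneg ht0, ← hDdef, ht]
        field_simp
      have hxvn : ‖x - (v : EuclideanSpace ℝ (Fin k))‖ = D - 3 / 4 := by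
        rw [hxv, norm_smul, Real.norm_eq_abs, abs_of_nonneg (by linarith), ← hDdef, ht]
        field_simp
      have hup : ‖(u : EuclideanSpace ℝ (Fin k)) - p‖ ≤ 1 := by
        calc ‖(u : EuclideanSpace ℝ (Fin k)) - p‖
            ≤ ‖(u : EuclideanSpace ℝ (Fin k)) - x‖ + ‖x - p‖ := by
              simpa using norm_sub_le_norm_sub_add_norm_sub (u : EuclideanSpace ℝ (Fin k)) x p
          _ ≤ 3 / 4 + 1 / 4 := by rw [huxn]; linarith
          _ = 1 := by norm_num
      have hpv : ‖((⟨p, hpV⟩ : V) : EuclideanSpace ℝ (Fin k)) -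
          (v : EuclideanSpace ℝ (Fin k))‖ < (n + 1) / 2 := by
        have : ‖p - (v : EuclideanSpace ℝ (Fin k))‖
            ≤ ‖p - x‖ + ‖x - (v : EuclideanSpace ℝ (Fin k))‖ :=
          norm_sub_le_norm_sub_add_norm_sub _ _ _
        have hpx' : ‖p - x‖ ≤ 1 / 4 := by rwa [← norm_neg, neg_sub]
        have : ‖p - (v : EuclideanSpace ℝ (Fin k))‖ ≤ D - 1 / 2 := by
          rw [hxvn] at this; linarith
        have hDn : D < (n + 2) / 2 := by push_cast at hD ⊢; linarith
        simp only []
        linarith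
      have hstep := ih hn1 ⟨p, hpV⟩ v hpv
      rcases eq_or_ne u (⟨p, hpV⟩ : V) with hupq | hne
      · rw [hupq]
        exact hstep.trans (by exact_mod_cast Nat.le_succ n)
      · have hadj : (geomGraph V).Adj u ⟨p, hpV⟩ := ⟨hne, hup⟩
        calc (geomGraph V).edist u v
            ≤ (geomGraph V).edist u ⟨p, hpV⟩ + (geomGraph V).edist ⟨p, hpV⟩ v :=
              SimpleGraph.edist_triangle
          _ ≤ 1 + (n : ℕ∞) := by
              gcongr
              have := SimpleGraph.edist_le (SimpleGraph.Walk.cons hadj SimpleGraph.Walk.nil)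
              simpa using this
          _ = ((n + 1 : ℕ) : ℕ∞) := by push_cast; ring

/-- Let `G` be a geometric graph in `ℝ^k` that is 4-dense, i.e. every Euclidean
ball of radius `1/4` centered at a point of the convex hull of `V` contains a point of `V`.
Then for all `u, v ∈ V` with `‖u − v‖ > 1`, the graph distance satisfies
`d_G(u,v) ≤ 2‖u − v‖`. (The graph distance is an integer, so this is expressed as
`edist u v ≤ ⌊2‖u − v‖⌋`; `edist` is `∞` when there is no path.) -/
theorem stmt16 (k : ℕ) (V : Set (EuclideanSpace ℝ (Fin k))) (hfin : V.Finite)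
    (hdense : ∀ x ∈ convexHull ℝ V, ∃ p ∈ V, ‖x - p‖ ≤ 1 / 4) :
    ∀ u v : V, 1 < ‖(u : EuclideanSpace ℝ (Fin k)) - (v : EuclideanSpace ℝ (Fin k))‖ →
      (geomGraph V).edist u v
        ≤ ((⌊2 * ‖(u : EuclideanSpace ℝ (Fin k)) - (v : EuclideanSpace ℝ (Fin k))‖⌋₊ : ℕ) : ℕ∞) := by
  intro u v hD
  set D := ‖(u : EuclideanSpace ℝ (Fin k)) - (v : EuclideanSpace ℝ (Fin k))‖ with hDdef
  have hn1 : 1 ≤ ⌊2 * D⌋₊ := Nat.le_floor (by push_cast; linarith)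
  have hlt : D < ((⌊2 * D⌋₊ : ℝ) + 1) / 2 := by
    have := Nat.lt_floor_add_one (2 * D)
    linarith
  exact auxkey hdense ⌊2 * D⌋₊ hn1 u v hlt
end

section
/- Let G be a geometric graph in ℝ² (vertices V ⊆ ℝ², distinct u, v adjacent iff ‖u − v‖ ≤ 1) that is 2√2-dense, i.e., every Euclidean ball of radius 1/(2√2) centered at a point of the convex hull of V contains a point of V. Then for all u, v ∈ V with ‖u − v‖ > 1, the graph distance satisfies d_G(u,v) ≤ 2√2·‖u − v‖. -/
open SimpleGraph

/-!
Put `D = ‖u - v‖`, `r = 1 / (2√2)`, and measure every vertex by its coordinate along the segment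
from `u` to `v` and its offset from the line through it. Among the vertices with offset at most `r`
and coordinate in `[0, D]`, two whose coordinates differ by at most `2r` are adjacent, since
`(2r)² + (2r)² = 1`; and density puts such a vertex within `r` of every point of the segment, so
their coordinates leave no gap longer than `2r`. A greedy walk (to the farthest vertex within `2r`,
then to the nearest one beyond) therefore advances by more than `2r` every two steps, and reaches
`v` within `⌊D / r⌋ = ⌊2√2 D⌋` steps; a last stretch of length in `(2r, 3r]` is crossed in two steps
through a vertex near the point at distance `3r / 2` before `v`.
-/

open RealInnerProductSpace

namespace SimpleGraph

variable {α : Type*} (G : SimpleGraph α)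

theorem edist_le_two_of_edist_le_one {a b c : α} (hab : G.edist a b ≤ 1) (hbc : G.edist b c ≤ 1) :
    G.edist a c ≤ 2 :=
  calc G.edist a c ≤ G.edist a b + G.edist b c := G.edist_triangle
    _ ≤ 1 + 1 := add_le_add hab hbc
    _ = 2 := one_add_one_eq_two

variable (f : α → ℝ) {T : Set α} {r : ℝ}

theorem exists_edist_le_two_of_no_long_gaps (hT : T.Finite) (hr : 0 ≤ r)
    (hadj : ∀ a ∈ T, ∀ b ∈ T, f a ≤ f b → f b - f a ≤ 2 * r → G.edist a b ≤ 1)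
    (hgap : ∀ a ∈ T, ∀ b ∈ T, 2 * r < f b - f a → ∃ c ∈ T, f a < f c ∧ f c < f b)
    {p v : α} (hp : p ∈ T) (hv : v ∈ T) (hpv : f p + 2 * r < f v) :
    ∃ z ∈ T, f p + 2 * r < f z ∧ f z ≤ f v ∧ G.edist p z ≤ 2 := by
  obtain ⟨q, ⟨hqT, hq⟩, hq_max⟩ := Set.exists_max_image {a ∈ T | f a ≤ f p + 2 * r} f
    (hT.subset fun _ h => h.1) ⟨p, hp, by linarith⟩
  obtain ⟨z, ⟨hzT, hz⟩, hz_min⟩ := Set.exists_min_image {a ∈ T | f p + 2 * r < f a} f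
    (hT.subset fun _ h => h.1) ⟨v, hv, hpv⟩
  have hpq : f p ≤ f q := hq_max p ⟨hp, by linarith⟩
  have hqz : f z - f q ≤ 2 * r := by
    by_contra! h
    obtain ⟨c, hcT, hqc, hcz⟩ := hgap q hqT z hzT h
    rcases le_or_gt (f c) (f p + 2 * r) with hc | hc
    · exact (hq_max c ⟨hcT, hc⟩).not_gt hqc
    · exact (hz_min c ⟨hcT, hc⟩).not_gt hcz
  exact ⟨z, hzT, hz, hz_min v ⟨hv, hpv⟩, G.edist_le_two_of_edist_le_one
    (hadj p hp q hqT hpq (by linarith)) (hadj q hqT z hzT (by linarith) hqz)⟩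

theorem edist_le_of_no_long_gaps (hT : T.Finite) (hr : 0 < r)
    (hadj : ∀ a ∈ T, ∀ b ∈ T, f a ≤ f b → f b - f a ≤ 2 * r → G.edist a b ≤ 1)
    (hgap : ∀ a ∈ T, ∀ b ∈ T, 2 * r < f b - f a → ∃ c ∈ T, f a < f c ∧ f c < f b)
    {v : α} (hv : v ∈ T)
    (hnear : ∀ p ∈ T, 2 * r < f v - f p → f v - f p ≤ 3 * r → G.edist p v ≤ 2)
    {p : α} (hp : p ∈ T) (hpv : f p ≤ f v) {k : ℕ} (hk : 1 ≤ k)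
    (hk_gap : f v - f p ≤ (k + 1) * r) : G.edist p v ≤ k := by
  induction k using Nat.strong_induction_on generalizing p with
  | _ k ih =>
  have hk_lt (m : ℕ) (h : m * r < f v - f p) : m < k + 1 := by
    exact_mod_cast lt_of_mul_lt_mul_right (h.trans_le hk_gap) hr.le
  rcases le_or_gt (f v - f p) (2 * r) with h2 | h2
  · exact (hadj p hp v hv hpv h2).trans (by exact_mod_cast hk)
  rcases le_or_gt (f v - f p) (3 * r) with h3 | h3
  · have := hk_lt 2 (by exact_mod_cast h2)
    exact (hnear p hp h2 h3).trans (by exact_mod_cast (by omega : 2 ≤ k))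
  have := hk_lt 3 (by exact_mod_cast h3)
  obtain ⟨z, hzT, hpz, hzv, hz⟩ :=
    G.exists_edist_le_two_of_no_long_gaps f hT hr.le hadj hgap hp hv (by linarith)
  have hzv' : G.edist z v ≤ (k - 2 : ℕ) :=
    ih (k - 2) (by omega) hzT hzv (by omega)
      (by push_cast [Nat.cast_sub (by omega : 2 ≤ k)]; linarith)
  calc G.edist p v ≤ G.edist p z + G.edist z v := G.edist_triangle
    _ ≤ 2 + (k - 2 : ℕ) := add_le_add hz hzv'
    _ = k := by norm_cast; omega

end SimpleGraph

section LineCoordinates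

variable {E : Type*} [NormedAddCommGroup E] [InnerProductSpace ℝ E] (u e : E)

def lineCoord (p : E) : ℝ := ⟪p - u, e⟫

def lineOffset (p : E) : E := p - u - lineCoord u e p • e

variable {u e}

theorem inner_lineOffset_eq_zero (he : ‖e‖ = 1) (p : E) : ⟪e, lineOffset u e p⟫ = 0 := by
  rw [lineOffset, lineCoord, inner_sub_right, real_inner_smul_right, real_inner_self_eq_norm_sq,
    he, real_inner_comm]
  ring

theorem norm_sub_sq_eq_lineCoord_add_lineOffset (he : ‖e‖ = 1) (p q : E) :
    ‖p - q‖ ^ 2 = (lineCoord u e p - lineCoord u e q) ^ 2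
      + ‖lineOffset u e p - lineOffset u e q‖ ^ 2 := by
  have hpq : p - q = (lineCoord u e p - lineCoord u e q) • e
      + (lineOffset u e p - lineOffset u e q) := by
    simp only [lineOffset, sub_smul]
    abel
  have horth :
      ⟪(lineCoord u e p - lineCoord u e q) • e, lineOffset u e p - lineOffset u e q⟫ = 0 := by
    rw [real_inner_smul_left, inner_sub_right, inner_lineOffset_eq_zero he,
      inner_lineOffset_eq_zero he, sub_zero, mul_zero]
  rw [hpq, sq, sq, sq, norm_add_sq_eq_norm_sq_add_norm_sq_real horth, norm_smul, he, mul_one,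
    Real.norm_eq_abs, abs_mul_abs_self]

theorem lineCoord_add_smul (he : ‖e‖ = 1) (τ : ℝ) : lineCoord u e (u + τ • e) = τ := by
  simp [lineCoord, real_inner_smul_left, he]

theorem lineOffset_add_smul (he : ‖e‖ = 1) (τ : ℝ) : lineOffset u e (u + τ • e) = 0 := by
  simp [lineOffset, lineCoord_add_smul he]

theorem norm_sub_add_smul_sq (he : ‖e‖ = 1) (p : E) (τ : ℝ) :
    ‖p - (u + τ • e)‖ ^ 2 = (lineCoord u e p - τ) ^ 2 + ‖lineOffset u e p‖ ^ 2 := by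
  rw [norm_sub_sq_eq_lineCoord_add_lineOffset he, lineCoord_add_smul he, lineOffset_add_smul he,
    sub_zero]

theorem abs_lineCoord_sub_le_and_norm_lineOffset_le (he : ‖e‖ = 1) {p : E} {τ r : ℝ}
    (h : ‖p - (u + τ • e)‖ ≤ r) : |lineCoord u e p - τ| ≤ r ∧ ‖lineOffset u e p‖ ≤ r := by
  have hr : 0 ≤ r := (norm_nonneg _).trans h
  have hsq : (lineCoord u e p - τ) ^ 2 + ‖lineOffset u e p‖ ^ 2 ≤ r ^ 2 := by
    rw [← norm_sub_add_smul_sq he]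
    exact pow_le_pow_left₀ (norm_nonneg _) h 2
  exact ⟨abs_le_of_sq_le_sq (by nlinarith [sq_nonneg ‖lineOffset u e p‖]) hr,
    abs_le_of_sq_le_sq' (by nlinarith [sq_nonneg (lineCoord u e p - τ)]) hr |>.2⟩

theorem norm_sub_le_one_of_norm_lineOffset_le (he : ‖e‖ = 1) {r : ℝ} (hr8 : 8 * r ^ 2 ≤ 1)
    {a b : E} (ha : ‖lineOffset u e a‖ ≤ r) (hb : ‖lineOffset u e b‖ ≤ r)
    (hab : lineCoord u e a ≤ lineCoord u e b) (hab' : lineCoord u e b - lineCoord u e a ≤ 2 * r) :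
    ‖a - b‖ ≤ 1 := by
  have hoff : ‖lineOffset u e a - lineOffset u e b‖ ≤ 2 * r := by
    linarith [norm_sub_le (lineOffset u e a) (lineOffset u e b)]
  rw [← sq_le_one_iff₀ (norm_nonneg _), norm_sub_sq_eq_lineCoord_add_lineOffset he]
  nlinarith [pow_le_pow_left₀ (norm_nonneg _) hoff 2]

variable {V : Set E} {D r : ℝ}

theorem exists_lineCoord_mem_Ioo (he : ‖e‖ = 1)
    (hwit : ∀ τ ∈ Set.Icc 0 D, ∃ q ∈ V, ‖q - (u + τ • e)‖ ≤ r) {s t : ℝ} (hs : s ∈ Set.Icc 0 D)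
    (ht : t ∈ Set.Icc 0 D) (hst : 2 * r < t - s) :
    ∃ q ∈ V, ‖lineOffset u e q‖ ≤ r ∧ s < lineCoord u e q ∧ lineCoord u e q < t := by
  obtain ⟨q, hqV, hq⟩ := hwit ((s + t) / 2) ⟨by linarith [hs.1, ht.1], by linarith [hs.2, ht.2]⟩
  obtain ⟨hcoord, hoff⟩ := abs_lineCoord_sub_le_and_norm_lineOffset_le he hq
  obtain ⟨h₁, h₂⟩ := abs_le.1 hcoord
  exact ⟨q, hqV, hoff, by linarith, by linarith⟩

/-- With `x = u + (D - 3 * r / 2) • e` we have `‖p - x‖ ≤ (√13 / 2) * r` and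
`‖x - (u + D • e)‖ = 3 * r / 2`, both at most `1 - r` when `8 * r ^ 2 ≤ 1`; so any vertex within
`r` of `x` will do. -/
theorem exists_two_hops_to_end (he : ‖e‖ = 1) (hr : 0 < r) (hr8 : 8 * r ^ 2 ≤ 1)
    (hwit : ∀ τ ∈ Set.Icc 0 D, ∃ q ∈ V, ‖q - (u + τ • e)‖ ≤ r) {p : E}
    (hp : ‖lineOffset u e p‖ ≤ r) (hp₀ : 0 ≤ lineCoord u e p)
    (h₂ : 2 * r < D - lineCoord u e p) (h₃ : D - lineCoord u e p ≤ 3 * r) :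
    ∃ q ∈ V, ‖p - q‖ ≤ 1 ∧ ‖q - (u + D • e)‖ ≤ 1 := by
  set x := u + (D - 3 * r / 2) • e
  obtain ⟨q, hqV, hq⟩ := hwit (D - 3 * r / 2) ⟨by linarith, by linarith⟩
  have hpx : ‖p - x‖ ≤ 1 - r := by
    have hcoord : (lineCoord u e p - (D - 3 * r / 2)) ^ 2 ≤ (3 * r / 2) ^ 2 :=
      sq_le_sq' (by linarith) (by linarith)
    rw [← pow_le_pow_iff_left₀ (norm_nonneg _) (by nlinarith) two_ne_zero,
      norm_sub_add_smul_sq he]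
    nlinarith [pow_le_pow_left₀ (norm_nonneg _) hp 2]
  have hxv : ‖x - (u + D • e)‖ = 3 * r / 2 := by
    rw [add_sub_add_left_eq_sub, ← sub_smul, norm_smul, he, mul_one, Real.norm_eq_abs,
      abs_of_neg (by linarith)]
    ring
  refine ⟨q, hqV, ?_, ?_⟩
  · linarith [norm_sub_le_norm_sub_add_norm_sub p x q, norm_sub_rev x q]
  · nlinarith [norm_sub_le_norm_sub_add_norm_sub q x (u + D • e)]

end LineCoordinates

theorem add_smul_normalize_mem_segment {E : Type*} [NormedAddCommGroup E] [NormedSpace ℝ E]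
    {u v : E} {τ : ℝ} (hτ : τ ∈ Set.Icc 0 ‖v - u‖) :
    u + τ • (‖v - u‖⁻¹ • (v - u)) ∈ segment ℝ u v := by
  rw [segment_eq_image']
  exact ⟨τ / ‖v - u‖, ⟨div_nonneg hτ.1 (norm_nonneg _), div_le_one_of_le₀ hτ.2 (norm_nonneg _)⟩,
    by rw [smul_smul, div_eq_mul_inv]⟩

section GeometricGraph

variable {n : ℕ} {V : Set (EuclideanSpace ℝ (Fin n))}

local notation "ℝⁿ" => EuclideanSpace ℝ (Fin n)

theorem geomGraph_edist_le_one {a b : V} (h : ‖(a : ℝⁿ) - b‖ ≤ 1) :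
    (geomGraph V).edist a b ≤ 1 := by
  by_cases hab : a = b
  · simp [hab]
  · exact (SimpleGraph.edist_eq_one_iff_adj.2 (show (geomGraph V).Adj a b from ⟨hab, h⟩)).le

theorem geomGraph_edist_le_floor_div (hV : V.Finite) {r : ℝ} (hr : 0 < r) (hr8 : 8 * r ^ 2 ≤ 1)
    (hdense : ∀ x ∈ convexHull ℝ V, ∃ p ∈ V, ‖x - p‖ ≤ r) {u v : V} (huv : r ≤ ‖(u : ℝⁿ) - v‖) :
    (geomGraph V).edist u v ≤ (⌊‖(u : ℝⁿ) - v‖ / r⌋₊ : ℕ∞) := by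
  rw [norm_sub_rev] at huv ⊢
  set D := ‖(v : ℝⁿ) - u‖
  set e := D⁻¹ • ((v : ℝⁿ) - u)
  have hD : 0 < D := hr.trans_le huv
  have he : ‖e‖ = 1 := norm_smul_inv_norm (norm_pos_iff.1 hD)
  have hv : (v : ℝⁿ) = u + D • e := by
    rw [smul_smul, mul_inv_cancel₀ hD.ne', one_smul, add_sub_cancel]
  have hwit (τ : ℝ) (hτ : τ ∈ Set.Icc 0 D) : ∃ q ∈ V, ‖q - (u + τ • e)‖ ≤ r := by
    obtain ⟨q, hqV, hq⟩ :=
      hdense _ (segment_subset_convexHull u.2 v.2 (add_smul_normalize_mem_segment hτ))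
    exact ⟨q, hqV, by rwa [norm_sub_rev]⟩
  have := hV.to_subtype
  let f : V → ℝ := fun p => lineCoord (u : ℝⁿ) e p
  let T : Set V := {p | ‖lineOffset (u : ℝⁿ) e p‖ ≤ r ∧ f p ∈ Set.Icc 0 D}
  have hfu : f u = 0 := by simp [f, lineCoord]
  have hfv : f v = D := by simp [f, hv, lineCoord_add_smul he]
  have huT : u ∈ T := by simp [T, hfu, lineOffset, lineCoord, hr.le, hD.le]
  have hvT : v ∈ T := by simp [T, hfv, hv, lineOffset_add_smul he, hr.le, hD.le]
  refine (geomGraph V).edist_le_of_no_long_gaps f T.toFinite hr ?_ ?_ hvT ?_ huT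
    (by rw [hfu, hfv]; exact hD.le) (Nat.le_floor (by rwa [Nat.cast_one, one_le_div₀ hr])) ?_
  · intro a ha b hb hab hab'
    exact geomGraph_edist_le_one (norm_sub_le_one_of_norm_lineOffset_le he hr8 ha.1 hb.1 hab hab')
  · intro a ha b hb hab
    obtain ⟨q, hqV, hq, haq, hqb⟩ := exists_lineCoord_mem_Ioo he hwit ha.2 hb.2 hab
    exact ⟨⟨q, hqV⟩, ⟨hq, by linarith [ha.2.1], by linarith [hb.2.2]⟩, haq, hqb⟩
  · intro p hp h₂ h₃
    rw [hfv] at h₂ h₃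
    obtain ⟨q, hqV, hpq, hqv⟩ := exists_two_hops_to_end he hr hr8 hwit hp.1 hp.2.1 h₂ h₃
    exact (geomGraph V).edist_le_two_of_edist_le_one (b := ⟨q, hqV⟩) (geomGraph_edist_le_one hpq)
      (geomGraph_edist_le_one (by rwa [hv]))
  · rw [hfu, hfv, sub_zero, ← div_le_iff₀ hr]
    exact (Nat.lt_floor_add_one _).le

end GeometricGraph

/-- Let `G` be a geometric (unit disk) graph in `ℝ²` that is `2√2`-dense, i.e.
every Euclidean ball of radius `1/(2√2)` centered at a point of the convex hull of `V`
contains a point of `V`. Then for all `u, v ∈ V` with `‖u − v‖ > 1`, the graph distance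
satisfies `d_G(u,v) ≤ 2√2·‖u − v‖`. (The graph distance is an integer, so this is expressed
as `edist u v ≤ ⌊2√2·‖u − v‖⌋`; `edist` is `∞` when there is no path.) -/
theorem stmt17 (V : Set (EuclideanSpace ℝ (Fin 2))) (hfin : V.Finite)
    (hdense : ∀ x ∈ convexHull ℝ V, ∃ p ∈ V, ‖x - p‖ ≤ 1 / (2 * Real.sqrt 2)) :
    ∀ u v : V, 1 < ‖(u : EuclideanSpace ℝ (Fin 2)) - (v : EuclideanSpace ℝ (Fin 2))‖ →
      (geomGraph V).edist u v
        ≤ ((⌊2 * Real.sqrt 2 *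
            ‖(u : EuclideanSpace ℝ (Fin 2)) - (v : EuclideanSpace ℝ (Fin 2))‖⌋₊ : ℕ) : ℕ∞) := by
  intro u v huv
  have hr : (0 : ℝ) < 1 / (2 * √2) := by positivity
  have hr8 : 8 * (1 / (2 * √2)) ^ 2 = 1 := by
    rw [div_pow, mul_pow, Real.sq_sqrt zero_le_two]
    norm_num
  have h := geomGraph_edist_le_floor_div hfin hr hr8.le hdense (u := u) (v := v) (by nlinarith)
  rwa [div_div_eq_mul_div, div_one, mul_comm] at h
end
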